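/- Let O be an order ideal of P_{m,n} and let h(O) be the (m,n)-partial height-function matrix corresponding to O under the bijection h(O)_{i,j} = i + j − 2·|O ∩ C_{i,j}|. Fix 1≤i≤m and 1≤j≤n, and let h' be the matrix obtained from h(O) by replacing the entry h(O)_{i,j} with h(O)_{i,j} + 2 or with h(O)_{i,j} − 2. Then h' is an (m,n)-partial height-function matrix if and only if there exists an element q ∈ C_{i,j} such that the toggle t_q satisfies t_q(O) ≠ O and h(t_q(O)) = h'. -/
import Mathlib


/-- The underlying set of the PASM poset `P_{m,n}`: triples `(i,j,k) ∈ ℤ³` with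
`0 ≤ k ≤ m-1`, `k ≤ j ≤ n-1`, and `k ≤ i ≤ m-1`. -/
def Pset (m n : ℕ) : Set (ℤ × ℤ × ℤ) :=
  {p | 0 ≤ p.2.2 ∧ p.2.2 ≤ (m : ℤ) - 1 ∧
       p.2.2 ≤ p.2.1 ∧ p.2.1 ≤ (n : ℤ) - 1 ∧
       p.2.2 ≤ p.1 ∧ p.1 ≤ (m : ℤ) - 1}

/-- The generating covering relations of `P_{m,n}`: `PCovBy m n x y` says that `y`
covers `x`, i.e. `y = (i,j,k)` and `x` is one of `(i+1,j,k)`, `(i,j+1,k)`,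
`(i-1,j,k-1)`, `(i,j-1,k-1)`, with both triples elements of `P_{m,n}`. -/
def PCovBy (m n : ℕ) (x y : ℤ × ℤ × ℤ) : Prop :=
  x ∈ Pset m n ∧ y ∈ Pset m n ∧
  (x = (y.1 + 1, y.2.1, y.2.2) ∨ x = (y.1, y.2.1 + 1, y.2.2) ∨
   x = (y.1 - 1, y.2.1, y.2.2 - 1) ∨ x = (y.1, y.2.1 - 1, y.2.2 - 1))

/-- The partial order of `P_{m,n}`: the reflexive-transitive closure of the
generating covering relations. -/
def Ple (m n : ℕ) (x y : ℤ × ℤ × ℤ) : Prop :=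
  Relation.ReflTransGen (PCovBy m n) x y

/-- The rank function of `P_{m,n}`: `(i,j,k) ↦ m + n - 2 - i - j + 2k`. -/
def Prank (m n : ℕ) (p : ℤ × ℤ × ℤ) : ℤ :=
  (m : ℤ) + n - 2 - p.1 - p.2.1 + 2 * p.2.2

/-- An order ideal of `P_{m,n}`: a downward-closed subset of `Pset m n`. -/
def IsOI (m n : ℕ) (O : Set (ℤ × ℤ × ℤ)) : Prop :=
  O ⊆ Pset m n ∧ ∀ y ∈ O, ∀ z, Ple m n z y → z ∈ O

/-- An `(m,n)`-partial height-function matrix: an `(m+1) × (n+1)` matrix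
`(h i j)_{0 ≤ i ≤ m, 0 ≤ j ≤ n}` of nonnegative integers with `h 0 k = k`,
`h ℓ 0 = ℓ`, and any two horizontally or vertically adjacent entries
differing by exactly 1.  (Represented as a function `ℕ → ℕ → ℤ` vanishing
outside the index range.) -/
def IsPHF (m n : ℕ) (h : ℕ → ℕ → ℤ) : Prop :=
  -- normalization: zero outside the matrix
  (∀ i j, m < i ∨ n < j → h i j = 0) ∧
  -- entries are nonnegative
  (∀ i j, i ≤ m → j ≤ n → 0 ≤ h i j) ∧
  -- first row: h 0 k = k
  (∀ k, k ≤ n → h 0 k = k) ∧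
  -- first column: h ℓ 0 = ℓ
  (∀ l, l ≤ m → h l 0 = l) ∧
  -- vertically adjacent entries differ by exactly 1
  (∀ i j, i < m → j ≤ n → h (i+1) j = h i j + 1 ∨ h (i+1) j = h i j - 1) ∧
  -- horizontally adjacent entries differ by exactly 1
  (∀ i j, i ≤ m → j < n → h i (j+1) = h i j + 1 ∨ h i (j+1) = h i j - 1)

/-- `Cset m n i j` (for `1 ≤ i ≤ m`, `1 ≤ j ≤ n`): the set of elements of `P_{m,n}`
whose first two coordinates are `(i-1, j-1)`. -/
def Cset (m n i j : ℕ) : Set (ℤ × ℤ × ℤ) :=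
  {p | p ∈ Pset m n ∧ p.1 = (i : ℤ) - 1 ∧ p.2.1 = (j : ℤ) - 1}

/-- The map sending an order ideal `O` of `P_{m,n}` to the matrix `(h i j)` with
`h 0 k = k`, `h ℓ 0 = ℓ`, and `h i j = i + j - 2|O ∩ C_{i,j}|` for
`1 ≤ i ≤ m`, `1 ≤ j ≤ n` (normalized to vanish outside `[0,m] × [0,n]`). -/
noncomputable def idealToPHF (m n : ℕ) (O : Set (ℤ × ℤ × ℤ)) : ℕ → ℕ → ℤ :=
  fun i j =>
    if i ≤ m ∧ j ≤ n then
      if i = 0 then (j : ℤ)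
      else if j = 0 then (i : ℤ)
      else (i : ℤ) + j - 2 * (O ∩ Cset m n i j).ncard
    else 0

open Classical in
/-- The toggle `t_q` on order ideals of `P_{m,n}`:  `t_q(O) = O ∪ {q}` if `q ∉ O`
and `O ∪ {q}` is an order ideal; `t_q(O) = O \ {q}` if `q ∈ O` and `O \ {q}` is an
order ideal; and `t_q(O) = O` otherwise. -/
noncomputable def toggle (m n : ℕ) (q : ℤ × ℤ × ℤ) (O : Set (ℤ × ℤ × ℤ)) :
    Set (ℤ × ℤ × ℤ) :=
  if q ∉ O ∧ IsOI m n (O ∪ {q}) then O ∪ {q}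
  else if q ∈ O ∧ IsOI m n (O \ {q}) then O \ {q}
  else O

/-- Replace the `(i,j)` entry of a matrix by `v`. -/
def replaceEntry (h : ℕ → ℕ → ℤ) (i j : ℕ) (v : ℤ) : ℕ → ℕ → ℤ :=
  fun a b => if a = i ∧ b = j then v else h a b

namespace PASM

variable {m n : ℕ} {O : Set (ℤ × ℤ × ℤ)}

lemma mem_Pset {a b k : ℤ} :
    ((a,b,k) : ℤ×ℤ×ℤ) ∈ Pset m n ↔
      0 ≤ k ∧ k ≤ (m:ℤ) - 1 ∧ k ≤ b ∧ b ≤ (n:ℤ) - 1 ∧ k ≤ a ∧ a ≤ (m:ℤ) - 1 :=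
  Iff.rfl

/-- one step in the k-chain: drop k by 1 -/
lemma ideal_down (hO : IsOI m n O) {a b k : ℤ} (h : (a,b,k) ∈ O) (hk : 1 ≤ k) :
    (a, b, k-1) ∈ O := by
  have hp := hO.1 h
  rw [mem_Pset] at hp
  have h1 : ((a-1, b, k-1) : ℤ×ℤ×ℤ) ∈ Pset m n := by rw [mem_Pset]; omega
  have h2 : ((a, b, k-1) : ℤ×ℤ×ℤ) ∈ Pset m n := by rw [mem_Pset]; omega
  refine hO.2 _ h _ ?_
  refine Relation.ReflTransGen.head ⟨h2, h1, Or.inl ?_⟩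
    (Relation.ReflTransGen.single ⟨h1, hO.1 h, Or.inr (Or.inr (Or.inl rfl))⟩)
  norm_num

lemma ideal_down_le (hO : IsOI m n O) {a b k k' : ℤ} (h : (a,b,k) ∈ O)
    (h0 : 0 ≤ k') (hk : k' ≤ k) : (a, b, k') ∈ O := by
  have key : ∀ t : ℕ, ∀ k : ℤ, (a,b,k) ∈ O → 0 ≤ k - t → (a, b, k - t) ∈ O := by
    intro t
    induction t with
    | zero => intro k h _; simpa using h
    | succ s ih =>
        intro k h hle
        have h1 : (a, b, k - s) ∈ O := ih k h (by push_cast at hle ⊢; omega)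
        have h2 : (a, b, (k - s) - 1) ∈ O := ideal_down hO h1 (by push_cast at hle; omega)
        have : (k : ℤ) - (s+1:ℕ) = (k - s) - 1 := by push_cast; ring
        rwa [this]
  have := key (k - k').toNat k h (by omega)
  have he : (k : ℤ) - ((k - k').toNat : ℤ) = k' := by omega
  rwa [he] at this

/-- step right: increase second coordinate -/
lemma step_right (hO : IsOI m n O) {a b k : ℤ} (h : (a,b,k) ∈ O)
    (hb : b + 1 ≤ (n:ℤ) - 1) : (a, b+1, k) ∈ O := by
  have hp := hO.1 h; rw [mem_Pset] at hp
  have h1 : ((a, b+1, k) : ℤ×ℤ×ℤ) ∈ Pset m n := by rw [mem_Pset]; omega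
  exact hO.2 _ h _ (Relation.ReflTransGen.single ⟨h1, hO.1 h, Or.inr (Or.inl rfl)⟩)

/-- step down: increase first coordinate -/
lemma step_down (hO : IsOI m n O) {a b k : ℤ} (h : (a,b,k) ∈ O)
    (ha : a + 1 ≤ (m:ℤ) - 1) : (a+1, b, k) ∈ O := by
  have hp := hO.1 h; rw [mem_Pset] at hp
  have h1 : ((a+1, b, k) : ℤ×ℤ×ℤ) ∈ Pset m n := by rw [mem_Pset]; omega
  exact hO.2 _ h _ (Relation.ReflTransGen.single ⟨h1, hO.1 h, Or.inl rfl⟩)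

/-- step up-left: decrease first coordinate and k -/
lemma step_upleft (hO : IsOI m n O) {a b k : ℤ} (h : (a,b,k) ∈ O) (hk : 1 ≤ k) :
    (a-1, b, k-1) ∈ O := by
  have hp := hO.1 h; rw [mem_Pset] at hp
  have h1 : ((a-1, b, k-1) : ℤ×ℤ×ℤ) ∈ Pset m n := by rw [mem_Pset]; omega
  exact hO.2 _ h _ (Relation.ReflTransGen.single ⟨h1, hO.1 h, Or.inr (Or.inr (Or.inl rfl))⟩)

/-- step up-back: decrease second coordinate and k -/
lemma step_upback (hO : IsOI m n O) {a b k : ℤ} (h : (a,b,k) ∈ O) (hk : 1 ≤ k) :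
    (a, b-1, k-1) ∈ O := by
  have hp := hO.1 h; rw [mem_Pset] at hp
  have h1 : ((a, b-1, k-1) : ℤ×ℤ×ℤ) ∈ Pset m n := by rw [mem_Pset]; omega
  exact hO.2 _ h _ (Relation.ReflTransGen.single ⟨h1, hO.1 h, Or.inr (Or.inr (Or.inr rfl))⟩)


open Classical

lemma downclosed_eq_range (T : Finset ℕ) (h : ∀ a ∈ T, ∀ b ≤ a, b ∈ T) :
    T = Finset.range T.card := by
  ext x
  simp only [Finset.mem_range]
  constructor
  · intro hx
    by_contra hlt
    push_neg at hlt
    have hsub : Finset.range (x+1) ⊆ T := fun b hb =>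
      h x hx b (by simpa using Nat.lt_succ_iff.mp (Finset.mem_range.mp hb))
    have := Finset.card_le_card hsub
    simp at this; omega
  · intro hx
    by_contra hxT
    have hsub : T ⊆ Finset.range x := by
      intro b hb
      simp only [Finset.mem_range]
      by_contra hge
      exact hxT (h b hb x (by omega))
    have := Finset.card_le_card hsub
    simp at this; omega

/-- the number of elements of `O` in the column `C_{i,j}` -/
noncomputable def cnt (m n : ℕ) (O : Set (ℤ × ℤ × ℤ)) (i j : ℕ) : ℕ :=
  (O ∩ Cset m n i j).ncard

lemma cnt_spec (hO : IsOI m n O) {i j : ℕ} (hi1 : 1 ≤ i) (him : i ≤ m)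
    (hj1 : 1 ≤ j) (hjn : j ≤ n) :
    cnt m n O i j ≤ min i j ∧
      ∀ k : ℤ, 0 ≤ k → (((i:ℤ)-1, (j:ℤ)-1, k) ∈ O ↔ k < (cnt m n O i j : ℤ)) := by
  classical
  set T : Finset ℕ :=
    (Finset.range (min i j)).filter (fun k => ((i:ℤ)-1, (j:ℤ)-1, (k:ℤ)) ∈ O) with hTdef
  have hmemT : ∀ k : ℕ, k ∈ T ↔ k < min i j ∧ ((i:ℤ)-1, (j:ℤ)-1, (k:ℤ)) ∈ O := by
    intro k; simp [hTdef]
  have hdc : ∀ a ∈ T, ∀ b ≤ a, b ∈ T := by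
    intro a ha b hb
    rw [hmemT] at ha ⊢
    exact ⟨by omega, ideal_down_le hO ha.2 (by positivity) (by exact_mod_cast hb)⟩
  have hrange := downclosed_eq_range T hdc
  have himg : O ∩ Cset m n i j = (fun k : ℕ => ((i:ℤ)-1, (j:ℤ)-1, (k:ℤ))) '' (T : Set ℕ) := by
    ext p
    constructor
    · rintro ⟨hpO, hpP, hp1, hp2⟩
      have hP := hO.1 hpO
      obtain ⟨a, b, k⟩ := p
      simp only at hp1 hp2
      subst hp1 hp2
      rw [mem_Pset] at hP
      refine ⟨k.toNat, ?_, ?_⟩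
      · rw [Finset.mem_coe, hmemT]
        constructor
        · omega
        · have : ((k.toNat : ℤ)) = k := by omega
          rw [this]; exact hpO
      · simp only; congr 2; omega
    · rintro ⟨k, hk, rfl⟩
      rw [Finset.mem_coe, hmemT] at hk
      refine ⟨hk.2, hO.1 hk.2, rfl, rfl⟩
  have hinj : Function.Injective (fun k : ℕ => ((i:ℤ)-1, (j:ℤ)-1, (k:ℤ))) := by
    intro a b hab
    simpa using hab
  have hcard : cnt m n O i j = T.card := by
    rw [cnt, himg, Set.ncard_image_of_injective _ hinj, Set.ncard_coe_finset]
  constructor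
  · rw [hcard, hTdef]
    calc ((Finset.range (min i j)).filter _).card ≤ (Finset.range (min i j)).card :=
          Finset.card_filter_le _ _
      _ = min i j := Finset.card_range _
  · intro k hk
    constructor
    · intro hmem
      have hP := hO.1 hmem
      rw [mem_Pset] at hP
      have : k.toNat ∈ T := by
        rw [hmemT]
        constructor
        · omega
        · have : ((k.toNat : ℤ)) = k := by omega
          rw [this]; exact hmem
      rw [hrange, Finset.mem_range] at this
      omega
    · intro hlt
      have : k.toNat ∈ T := by
        rw [hrange, Finset.mem_range]; omega
      rw [hmemT] at this
      have he : ((k.toNat : ℤ)) = k := by omega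
      rw [he] at this
      exact this.2


/-- horizontally adjacent counts: `c_{i,j} ≤ c_{i,j+1} ≤ c_{i,j}+1` -/
lemma cnt_right (hO : IsOI m n O) {i j : ℕ} (hi1 : 1 ≤ i) (him : i ≤ m)
    (hj1 : 1 ≤ j) (hjn : j + 1 ≤ n) :
    cnt m n O i j ≤ cnt m n O i (j+1) ∧ cnt m n O i (j+1) ≤ cnt m n O i j + 1 := by
  obtain ⟨hb1, hc1⟩ := cnt_spec hO hi1 him hj1 (by omega) (O := O)
  obtain ⟨hb2, hc2⟩ := cnt_spec hO hi1 him (by omega : 1 ≤ j+1) hjn (O := O)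
  set c1 := cnt m n O i j
  set c2 := cnt m n O i (j+1)
  have hcast : ((j+1 : ℕ) : ℤ) - 1 = (j : ℤ) := by push_cast; ring
  constructor
  · rcases Nat.eq_zero_or_pos c1 with h0 | h0
    · omega
    · have hm : ((i:ℤ)-1, (j:ℤ)-1, ((c1:ℤ)-1)) ∈ O := (hc1 _ (by omega)).mpr (by omega)
      have := step_right hO hm (by omega)
      rw [show ((j:ℤ)-1) + 1 = ((j+1:ℕ):ℤ) - 1 by push_cast; ring] at this
      have := (hc2 _ (by omega)).mp this
      omega
  · rcases (by omega : c2 ≤ 1 ∨ 2 ≤ c2) with h0 | h0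
    · omega
    · have hm : ((i:ℤ)-1, ((j+1:ℕ):ℤ)-1, ((c2:ℤ)-1)) ∈ O := (hc2 _ (by omega)).mpr (by omega)
      have := step_upback hO hm (by omega)
      rw [hcast] at this
      rw [show (j:ℤ) - 1 = ((j:ℕ):ℤ) - 1 by norm_num] at this
      have := (hc1 _ (by omega)).mp this
      omega

/-- vertically adjacent counts: `c_{i,j} ≤ c_{i+1,j} ≤ c_{i,j}+1` -/
lemma cnt_down (hO : IsOI m n O) {i j : ℕ} (hi1 : 1 ≤ i) (him : i + 1 ≤ m)
    (hj1 : 1 ≤ j) (hjn : j ≤ n) :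
    cnt m n O i j ≤ cnt m n O (i+1) j ∧ cnt m n O (i+1) j ≤ cnt m n O i j + 1 := by
  obtain ⟨hb1, hc1⟩ := cnt_spec hO hi1 (by omega) hj1 hjn (O := O)
  obtain ⟨hb2, hc2⟩ := cnt_spec hO (by omega : 1 ≤ i+1) him hj1 hjn (O := O)
  set c1 := cnt m n O i j
  set c2 := cnt m n O (i+1) j
  have hcast : ((i+1 : ℕ) : ℤ) - 1 = (i : ℤ) := by push_cast; ring
  constructor
  · rcases Nat.eq_zero_or_pos c1 with h0 | h0
    · omega
    · have hm : ((i:ℤ)-1, (j:ℤ)-1, ((c1:ℤ)-1)) ∈ O := (hc1 _ (by omega)).mpr (by omega)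
      have := step_down hO hm (by omega)
      rw [show ((i:ℤ)-1) + 1 = ((i+1:ℕ):ℤ) - 1 by push_cast; ring] at this
      have := (hc2 _ (by omega)).mp this
      omega
  · rcases (by omega : c2 ≤ 1 ∨ 2 ≤ c2) with h0 | h0
    · omega
    · have hm : (((i+1:ℕ):ℤ)-1, ((j:ℕ):ℤ)-1, ((c2:ℤ)-1)) ∈ O := (hc2 _ (by omega)).mpr (by omega)
      have := step_upleft hO hm (by omega)
      rw [hcast] at this
      have := (hc1 _ (by omega)).mp this
      omega

lemma idealToPHF_eq {i j : ℕ} (hi1 : 1 ≤ i) (him : i ≤ m) (hj1 : 1 ≤ j) (hjn : j ≤ n) :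
    idealToPHF m n O i j = (i:ℤ) + j - 2 * (cnt m n O i j : ℤ) := by
  rw [idealToPHF, if_pos ⟨him, hjn⟩, if_neg (by omega), if_neg (by omega)]
  rfl

lemma idealToPHF_row0 {j : ℕ} (hjn : j ≤ n) : idealToPHF m n O 0 j = (j : ℤ) := by
  rw [idealToPHF, if_pos ⟨Nat.zero_le _, hjn⟩, if_pos rfl]

lemma idealToPHF_col0 {i : ℕ} (him : i ≤ m) : idealToPHF m n O i 0 = (i : ℤ) := by
  rcases Nat.eq_zero_or_pos i with h | h
  · subst h; rw [idealToPHF, if_pos ⟨Nat.zero_le _, Nat.zero_le _⟩]; norm_num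
  · rw [idealToPHF, if_pos ⟨him, Nat.zero_le _⟩, if_neg (by omega), if_pos rfl]

lemma isPHF_idealToPHF (hO : IsOI m n O) : IsPHF m n (idealToPHF m n O) := by
  refine ⟨?_, ?_, ?_, ?_, ?_, ?_⟩
  · intro a b hab
    rw [idealToPHF, if_neg (by omega)]
  · intro a b ham hbn
    rcases Nat.eq_zero_or_pos a with h | ha1
    · subst h; rw [idealToPHF_row0 hbn]; positivity
    rcases Nat.eq_zero_or_pos b with h | hb1
    · subst h; rw [idealToPHF_col0 ham]; positivity
    rw [idealToPHF_eq ha1 ham hb1 hbn]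
    have := (cnt_spec hO ha1 ham hb1 hbn (O := O)).1
    omega
  · intro k hk; exact idealToPHF_row0 hk
  · intro l hl; exact idealToPHF_col0 hl
  · intro a b ham hbn
    rcases Nat.eq_zero_or_pos b with h | hb1
    · subst h
      rw [idealToPHF_col0 (by omega), idealToPHF_col0 (by omega)]
      left; push_cast; ring
    rcases Nat.eq_zero_or_pos a with h | ha1
    · subst h
      rw [idealToPHF_row0 hbn, idealToPHF_eq (by omega) (by omega) hb1 hbn]
      have := (cnt_spec hO (by omega : 1 ≤ 1) (by omega) hb1 hbn (O := O)).1
      have h1 : cnt m n O 1 b ≤ 1 := by omega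
      rcases Nat.eq_zero_or_pos (cnt m n O 1 b) with h | h
      · left; rw [h]; push_cast; ring
      · right; have : cnt m n O 1 b = 1 := by omega
        rw [this]; push_cast; ring
    · rw [idealToPHF_eq ha1 (by omega) hb1 hbn, idealToPHF_eq (by omega) (by omega) hb1 hbn]
      have := cnt_down hO ha1 (by omega) hb1 hbn (O := O)
      rcases (by omega : cnt m n O (a+1) b = cnt m n O a b ∨
          cnt m n O (a+1) b = cnt m n O a b + 1) with h | h
      · left; rw [h]; push_cast; ring
      · right; rw [h]; push_cast; ring
  · intro a b ham hbn
    rcases Nat.eq_zero_or_pos a with h | ha1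
    · subst h
      rw [idealToPHF_row0 (by omega), idealToPHF_row0 (by omega)]
      left; push_cast; ring
    rcases Nat.eq_zero_or_pos b with h | hb1
    · subst h
      rw [idealToPHF_col0 ham, idealToPHF_eq ha1 ham (by omega) (by omega)]
      have := (cnt_spec hO ha1 ham (by omega : 1 ≤ 1) (by omega) (O := O)).1
      have h1 : cnt m n O a 1 ≤ 1 := by omega
      rcases Nat.eq_zero_or_pos (cnt m n O a 1) with h | h
      · left; rw [h]; push_cast; ring
      · right; have : cnt m n O a 1 = 1 := by omega
        rw [this]; push_cast; ring
    · rw [idealToPHF_eq ha1 ham hb1 (by omega), idealToPHF_eq ha1 ham (by omega) (by omega)]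
      have := cnt_right hO ha1 ham hb1 (by omega) (O := O)
      rcases (by omega : cnt m n O a (b+1) = cnt m n O a b ∨
          cnt m n O a (b+1) = cnt m n O a b + 1) with h | h
      · left; rw [h]; push_cast; ring
      · right; rw [h]; push_cast; ring


lemma isOI_insert (hO : IsOI m n O) {q : ℤ×ℤ×ℤ} (hq : q ∈ Pset m n)
    (hcov : ∀ x, PCovBy m n x q → x ∈ O) : IsOI m n (O ∪ {q}) := by
  constructor
  · exact Set.union_subset hO.1 (by simpa using hq)
  · rintro y (hy | hy) z hz
    · exact Or.inl (hO.2 y hy z hz)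
    · rcases hy with rfl
      rcases Relation.ReflTransGen.cases_tail hz with h | ⟨x, hzx, hxy⟩
      · exact Or.inr (by simp [h])
      · exact Or.inl (hO.2 x (hcov x hxy) z hzx)

lemma isOI_erase (hO : IsOI m n O) {q : ℤ×ℤ×ℤ}
    (hcov : ∀ y, PCovBy m n q y → y ∉ O) : IsOI m n (O \ {q}) := by
  constructor
  · exact (Set.diff_subset).trans hO.1
  · rintro y ⟨hyO, hyq⟩ z hz
    refine ⟨hO.2 y hyO z hz, ?_⟩
    rintro rfl
    rcases Relation.ReflTransGen.cases_head hz with h | ⟨x, hzx, hxy⟩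
    · exact hyq (by simp [h])
    · exact hcov x hzx (hO.2 y hyO x hxy)

lemma mem_Cset {i j : ℕ} {p : ℤ×ℤ×ℤ} :
    p ∈ Cset m n i j ↔ p ∈ Pset m n ∧ p.1 = (i:ℤ)-1 ∧ p.2.1 = (j:ℤ)-1 := Iff.rfl

lemma notMem_Cset_of_ne {i j a b : ℕ} {q : ℤ×ℤ×ℤ} (hq : q ∈ Cset m n i j)
    (hne : ¬(a = i ∧ b = j)) : q ∉ Cset m n a b := by
  intro hq'
  rcases hq with ⟨_, h1, h2⟩
  rcases hq' with ⟨_, h1', h2'⟩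
  apply hne
  constructor <;> omega

/-- the value of `idealToPHF` on a modified set agreeing with `O` outside `C_{i,j}` -/
lemma idealToPHF_congr_outside {O' : Set (ℤ×ℤ×ℤ)} {a b : ℕ}
    (hi : ∀ p ∈ Cset m n a b, (p ∈ O' ↔ p ∈ O)) :
    idealToPHF m n O' a b = idealToPHF m n O a b := by
  rw [idealToPHF, idealToPHF]
  have : O' ∩ Cset m n a b = O ∩ Cset m n a b := by
    ext p
    exact and_congr_left (fun hp => hi p hp)
  rw [this]


lemma isOI_toggle (hO : IsOI m n O) (q : ℤ×ℤ×ℤ) : IsOI m n (toggle m n q O) := by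
  rw [toggle]
  split_ifs with h1 h2
  · exact h1.2
  · exact h2.2
  · exact hO

end PASM

open PASM in
/-- Let `O` be an order ideal of `P_{m,n}`, let `h = h(O)` be the
corresponding partial height-function matrix, fix `1 ≤ i ≤ m`, `1 ≤ j ≤ n`, and let
`h'` be obtained from `h` by replacing the entry `h i j` by `h i j + 2` or by
`h i j - 2`.  Then `h'` is an `(m,n)`-partial height-function matrix if and only if
there exists `q ∈ C_{i,j}` with `t_q(O) ≠ O` and `h(t_q(O)) = h'`. -/
theorem phf_modification_iff_toggle (m n i j : ℕ) (O : Set (ℤ × ℤ × ℤ))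
    (hO : IsOI m n O) (hi1 : 1 ≤ i) (him : i ≤ m) (hj1 : 1 ≤ j) (hjn : j ≤ n)
    (d : ℤ) (hd : d = 2 ∨ d = -2) :
    IsPHF m n (replaceEntry (idealToPHF m n O) i j (idealToPHF m n O i j + d)) ↔
      ∃ q ∈ Cset m n i j, toggle m n q O ≠ O ∧
        idealToPHF m n (toggle m n q O) =
          replaceEntry (idealToPHF m n O) i j (idealToPHF m n O i j + d) := by
  constructor
  · intro hPHF
    have hPHFo := isPHF_idealToPHF hO (O := O)
    obtain ⟨hcmin, hchar⟩ := cnt_spec hO hi1 him hj1 hjn (O := O)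
    set h := idealToPHF m n O with hh
    set c := cnt m n O i j with hc
    -- entry values of the modified matrix
    have e1 : replaceEntry h i j (h i j + d) i j = h i j + d := by
      simp [replaceEntry]
    -- neighbor equations
    have hv' := hPHF.2.2.2.2.1 (i-1) j (by omega) hjn
    rw [show i-1+1 = i from by omega, e1,
      show replaceEntry h i j (h i j + d) (i-1) j = h (i-1) j from by
        simp only [replaceEntry]; exact if_neg (by omega)] at hv'
    have hv := hPHFo.2.2.2.2.1 (i-1) j (by omega) hjn
    rw [show i-1+1 = i from by omega] at hv
    have hup2 : 2 * h (i-1) j = 2 * h i j + d := by rcases hd with rfl | rfl <;> omega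
    have hw' := hPHF.2.2.2.2.2 i (j-1) him (by omega)
    rw [show j-1+1 = j from by omega, e1,
      show replaceEntry h i j (h i j + d) i (j-1) = h i (j-1) from by
        simp only [replaceEntry]; exact if_neg (by omega)] at hw'
    have hw := hPHFo.2.2.2.2.2 i (j-1) him (by omega)
    rw [show j-1+1 = j from by omega] at hw
    have hleft2 : 2 * h i (j-1) = 2 * h i j + d := by rcases hd with rfl | rfl <;> omega
    have hdown2 : i < m → 2 * h (i+1) j = 2 * h i j + d := by
      intro hlt
      have hv' := hPHF.2.2.2.2.1 i j hlt hjn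
      rw [e1, show replaceEntry h i j (h i j + d) (i+1) j = h (i+1) j from by
        simp only [replaceEntry]; exact if_neg (by omega)] at hv'
      have hv := hPHFo.2.2.2.2.1 i j hlt hjn
      rcases hd with rfl | rfl <;> omega
    have hright2 : j < n → 2 * h i (j+1) = 2 * h i j + d := by
      intro hlt
      have hv' := hPHF.2.2.2.2.2 i j him hlt
      rw [e1, show replaceEntry h i j (h i j + d) i (j+1) = h i (j+1) from by
        simp only [replaceEntry]; exact if_neg (by omega)] at hv'
      have hv := hPHFo.2.2.2.2.2 i j him hlt
      rcases hd with rfl | rfl <;> omega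
    have hij : h i j = (i:ℤ) + j - 2 * (c:ℤ) := idealToPHF_eq hi1 him hj1 hjn
    -- neighbor column data
    have specU := fun (h2 : 2 ≤ i) =>
      cnt_spec hO (i := i-1) (j := j) (by omega) (by omega) hj1 hjn (O := O)
    have specD := fun (hlt : i < m) =>
      cnt_spec hO (i := i+1) (j := j) (by omega) (by omega) hj1 hjn (O := O)
    have specL := fun (h2 : 2 ≤ j) =>
      cnt_spec hO (i := i) (j := j-1) hi1 him (by omega) (by omega) (O := O)
    have specR := fun (hlt : j < n) =>
      cnt_spec hO (i := i) (j := j+1) hi1 him (by omega) (by omega) (O := O)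
    have memU : 2 ≤ i → ∀ k : ℤ, 0 ≤ k →
        (((i:ℤ)-2, (j:ℤ)-1, k) ∈ O ↔ k < (cnt m n O (i-1) j : ℤ)) := by
      intro h2 k hk
      have h5 := (specU h2).2 k hk
      rwa [show ((i-1:ℕ):ℤ) - 1 = (i:ℤ)-2 from by omega] at h5
    have memD : i < m → ∀ k : ℤ, 0 ≤ k →
        (((i:ℤ), (j:ℤ)-1, k) ∈ O ↔ k < (cnt m n O (i+1) j : ℤ)) := by
      intro hlt k hk
      have h5 := (specD hlt).2 k hk
      rwa [show ((i+1:ℕ):ℤ) - 1 = (i:ℤ) from by omega] at h5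
    have memL : 2 ≤ j → ∀ k : ℤ, 0 ≤ k →
        (((i:ℤ)-1, (j:ℤ)-2, k) ∈ O ↔ k < (cnt m n O i (j-1) : ℤ)) := by
      intro h2 k hk
      have h5 := (specL h2).2 k hk
      rwa [show ((j-1:ℕ):ℤ) - 1 = (j:ℤ)-2 from by omega] at h5
    have memR : j < n → ∀ k : ℤ, 0 ≤ k →
        (((i:ℤ)-1, (j:ℤ), k) ∈ O ↔ k < (cnt m n O i (j+1) : ℤ)) := by
      intro hlt k hk
      have h5 := (specR hlt).2 k hk
      rwa [show ((j+1:ℕ):ℤ) - 1 = (j:ℤ) from by omega] at h5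
    have hUv : 2 ≤ i → h (i-1) j = ((i-1:ℕ):ℤ) + j - 2 * (cnt m n O (i-1) j : ℤ) :=
      fun h2 => idealToPHF_eq (by omega) (by omega) hj1 hjn
    have hLv : 2 ≤ j → h i (j-1) = (i:ℤ) + ((j-1:ℕ):ℤ) - 2 * (cnt m n O i (j-1) : ℤ) :=
      fun h2 => idealToPHF_eq hi1 him (by omega) (by omega)
    have hDv : i < m → h (i+1) j = ((i+1:ℕ):ℤ) + j - 2 * (cnt m n O (i+1) j : ℤ) :=
      fun hlt => idealToPHF_eq (by omega) (by omega) hj1 hjn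
    have hRv : j < n → h i (j+1) = (i:ℤ) + ((j+1:ℕ):ℤ) - 2 * (cnt m n O i (j+1) : ℤ) :=
      fun hlt => idealToPHF_eq hi1 him (by omega) (by omega)
    have hU0 : i = 1 → h (i-1) j = (j:ℤ) := by
      intro h1; subst h1; exact idealToPHF_row0 hjn
    have hL0 : j = 1 → h i (j-1) = (i:ℤ) := by
      intro h1; subst h1; exact idealToPHF_col0 him
    rcases hd with rfl | rfl
    · -- d = 2 : remove the top element of the column C_{i,j}
      have hcU : 2 ≤ i → (cnt m n O (i-1) j : ℤ) = (c:ℤ) - 1 := by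
        intro h2; have := hUv h2; omega
      have hcI1 : i = 1 → c = 1 := by
        intro h1; have := hU0 h1; omega
      have hcL : 2 ≤ j → (cnt m n O i (j-1) : ℤ) = (c:ℤ) - 1 := by
        intro h2; have := hLv h2; omega
      have hcJ1 : j = 1 → c = 1 := by
        intro h1; have := hL0 h1; omega
      have hcD : i < m → (cnt m n O (i+1) j : ℤ) = (c:ℤ) := by
        intro hlt; have := hDv hlt; have := hdown2 hlt; omega
      have hcR : j < n → (cnt m n O i (j+1) : ℤ) = (c:ℤ) := by
        intro hlt; have := hRv hlt; have := hright2 hlt; omega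
      have hc1 : 1 ≤ c := by
        rcases (by omega : i = 1 ∨ 2 ≤ i) with h1 | h2
        · have := hcI1 h1; omega
        · have := hcU h2; omega
      have hqO : ((i:ℤ)-1, (j:ℤ)-1, (c:ℤ)-1) ∈ O := (hchar _ (by omega)).mpr (by omega)
      have hqC : (((i:ℤ)-1, (j:ℤ)-1, (c:ℤ)-1) : ℤ×ℤ×ℤ) ∈ Cset m n i j :=
        ⟨hO.1 hqO, rfl, rfl⟩
      have hcov : ∀ y, PCovBy m n ((i:ℤ)-1, (j:ℤ)-1, (c:ℤ)-1) y → y ∉ O := by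
        rintro ⟨y1, y2, y3⟩ ⟨hqP, hyP, hdisj⟩ hyO
        rw [mem_Pset] at hyP
        rcases hdisj with he | he | he | he <;>
          (simp only [Prod.mk.injEq] at he) <;>
          obtain ⟨e1, e2, e3⟩ := he
        · -- y = (i-2, j-1, c-1)
          have h2 : 2 ≤ i := by omega
          have h5 := (memU h2 y3 (by omega)).mp (by
            rw [show (i:ℤ)-2 = y1 from by omega, show (j:ℤ)-1 = y2 from by omega]
            exact hyO)
          have := hcU h2
          omega
        · -- y = (i-1, j-2, c-1)
          have h2 : 2 ≤ j := by omega
          have h5 := (memL h2 y3 (by omega)).mp (by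
            rw [show (i:ℤ)-1 = y1 from by omega, show (j:ℤ)-2 = y2 from by omega]
            exact hyO)
          have := hcL h2
          omega
        · -- y = (i, j-1, c)
          have hlt : i < m := by omega
          have h5 := (memD hlt y3 (by omega)).mp (by
            rw [show (i:ℤ) = y1 from by omega, show (j:ℤ)-1 = y2 from by omega]
            exact hyO)
          have := hcD hlt
          omega
        · -- y = (i-1, j, c)
          have hlt : j < n := by omega
          have h5 := (memR hlt y3 (by omega)).mp (by
            rw [show (i:ℤ)-1 = y1 from by omega, show (j:ℤ) = y2 from by omega]
            exact hyO)
          have := hcR hlt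
          omega
      have hOI2 : IsOI m n (O \ {((i:ℤ)-1, (j:ℤ)-1, (c:ℤ)-1)}) := isOI_erase hO hcov
      have htog : toggle m n ((i:ℤ)-1, (j:ℤ)-1, (c:ℤ)-1) O
          = O \ {((i:ℤ)-1, (j:ℤ)-1, (c:ℤ)-1)} := by
        rw [toggle, if_neg (fun hcon => hcon.1 hqO), if_pos ⟨hqO, hOI2⟩]
      obtain ⟨hcmin2, hchar2⟩ := cnt_spec hOI2 hi1 him hj1 hjn
      have hcnt2 : (cnt m n (O \ {((i:ℤ)-1, (j:ℤ)-1, (c:ℤ)-1)}) i j : ℤ) = (c:ℤ) - 1 := by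
        have hub : ¬ ((c:ℤ)-1 < (cnt m n (O \ {((i:ℤ)-1, (j:ℤ)-1, (c:ℤ)-1)}) i j : ℤ)) := by
          intro hlt
          have h5 := (hchar2 ((c:ℤ)-1) (by omega)).mpr hlt
          exact h5.2 rfl
        have hlb : (c:ℤ) - 2 < (cnt m n (O \ {((i:ℤ)-1, (j:ℤ)-1, (c:ℤ)-1)}) i j : ℤ) ∨ c = 1 := by
          rcases (by omega : c = 1 ∨ 2 ≤ c) with h1 | h2
          · exact Or.inr h1
          · left
            refine (hchar2 _ (by omega)).mp ⟨(hchar _ (by omega)).mpr (by omega), ?_⟩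
            intro hcon
            rw [Set.mem_singleton_iff, Prod.mk.injEq, Prod.mk.injEq] at hcon
            omega
        rcases hlb with h1 | h1 <;> omega
      refine ⟨_, hqC, ?_, ?_⟩
      · rw [htog]
        intro hEq
        have h5 : (((i:ℤ)-1, (j:ℤ)-1, (c:ℤ)-1) : ℤ×ℤ×ℤ)
            ∈ O \ {((i:ℤ)-1, (j:ℤ)-1, (c:ℤ)-1)} := hEq.symm ▸ hqO
        exact h5.2 rfl
      · rw [htog]
        funext a b
        simp only [replaceEntry]
        by_cases hab : a = i ∧ b = j
        · obtain ⟨rfl, rfl⟩ := hab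
          rw [if_pos ⟨rfl, rfl⟩, idealToPHF_eq hi1 him hj1 hjn, hij, hcnt2]
          ring
        · rw [if_neg hab]
          refine idealToPHF_congr_outside (fun p hp => ?_)
          have hpq : p ≠ ((i:ℤ)-1, (j:ℤ)-1, (c:ℤ)-1) :=
            fun hcon => notMem_Cset_of_ne hqC hab (hcon ▸ hp)
          exact ⟨fun h5 => h5.1, fun h5 => ⟨h5, fun hcon => hpq hcon⟩⟩
    · -- d = -2 : add a new top element to the column C_{i,j}
      have hcU : 2 ≤ i → (cnt m n O (i-1) j : ℤ) = (c:ℤ) := by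
        intro h2; have := hUv h2; omega
      have hcI1 : i = 1 → c = 0 := by
        intro h1; have := hU0 h1; omega
      have hcL : 2 ≤ j → (cnt m n O i (j-1) : ℤ) = (c:ℤ) := by
        intro h2; have := hLv h2; omega
      have hcJ1 : j = 1 → c = 0 := by
        intro h1; have := hL0 h1; omega
      have hcD : i < m → (cnt m n O (i+1) j : ℤ) = (c:ℤ) + 1 := by
        intro hlt; have := hDv hlt; have := hdown2 hlt; omega
      have hcR : j < n → (cnt m n O i (j+1) : ℤ) = (c:ℤ) + 1 := by
        intro hlt; have := hRv hlt; have := hright2 hlt; omega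
      have hci : c + 1 ≤ i := by
        rcases (by omega : i = 1 ∨ 2 ≤ i) with h1 | h2
        · have := hcI1 h1; omega
        · have := hcU h2; have := (specU h2).1; omega
      have hcj : c + 1 ≤ j := by
        rcases (by omega : j = 1 ∨ 2 ≤ j) with h1 | h2
        · have := hcJ1 h1; omega
        · have := hcL h2; have := (specL h2).1; omega
      have hqP : (((i:ℤ)-1, (j:ℤ)-1, (c:ℤ)) : ℤ×ℤ×ℤ) ∈ Pset m n := by
        rw [mem_Pset]; omega
      have hqC : (((i:ℤ)-1, (j:ℤ)-1, (c:ℤ)) : ℤ×ℤ×ℤ) ∈ Cset m n i j := ⟨hqP, rfl, rfl⟩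
      have hqO : (((i:ℤ)-1, (j:ℤ)-1, (c:ℤ)) : ℤ×ℤ×ℤ) ∉ O := by
        intro hmem
        have := (hchar _ (by omega)).mp hmem
        omega
      have hcov : ∀ x, PCovBy m n x ((i:ℤ)-1, (j:ℤ)-1, (c:ℤ)) → x ∈ O := by
        rintro x ⟨hxP, hqP', hdisj⟩
        rcases hdisj with rfl | rfl | rfl | rfl <;> dsimp only at hxP ⊢ <;>
          rw [mem_Pset] at hxP
        · -- x = (i, j-1, c)
          have hlt : i < m := by omega
          have h5 := (memD hlt (c:ℤ) (by omega)).mpr (by have := hcD hlt; omega)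
          rw [show ((i:ℤ)-1)+1 = (i:ℤ) from by ring]
          exact h5
        · -- x = (i-1, j, c)
          have hlt : j < n := by omega
          have h5 := (memR hlt (c:ℤ) (by omega)).mpr (by have := hcR hlt; omega)
          rw [show ((j:ℤ)-1)+1 = (j:ℤ) from by ring]
          exact h5
        · -- x = (i-2, j-1, c-1)
          have h2 : 2 ≤ i := by
            rcases (by omega : i = 1 ∨ 2 ≤ i) with h1 | h2
            · have := hcI1 h1; omega
            · exact h2
          have h5 := (memU h2 ((c:ℤ)-1) (by omega)).mpr (by have := hcU h2; omega)
          rw [show (i:ℤ)-1-1 = (i:ℤ)-2 from by ring]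
          exact h5
        · -- x = (i-1, j-2, c-1)
          have h2 : 2 ≤ j := by
            rcases (by omega : j = 1 ∨ 2 ≤ j) with h1 | h2
            · have := hcJ1 h1; omega
            · exact h2
          have h5 := (memL h2 ((c:ℤ)-1) (by omega)).mpr (by have := hcL h2; omega)
          rw [show (j:ℤ)-1-1 = (j:ℤ)-2 from by ring]
          exact h5
      have hOI2 : IsOI m n (O ∪ {((i:ℤ)-1, (j:ℤ)-1, (c:ℤ))}) := isOI_insert hO hqP hcov
      have htog : toggle m n ((i:ℤ)-1, (j:ℤ)-1, (c:ℤ)) O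
          = O ∪ {((i:ℤ)-1, (j:ℤ)-1, (c:ℤ))} := by
        rw [toggle, if_pos ⟨hqO, hOI2⟩]
      obtain ⟨hcmin2, hchar2⟩ := cnt_spec hOI2 hi1 him hj1 hjn
      have hcnt2 : (cnt m n (O ∪ {((i:ℤ)-1, (j:ℤ)-1, (c:ℤ))}) i j : ℤ) = (c:ℤ) + 1 := by
        have hlb := (hchar2 (c:ℤ) (by omega)).mp (Or.inr rfl)
        have hub : ¬ ((c:ℤ)+1 < (cnt m n (O ∪ {((i:ℤ)-1, (j:ℤ)-1, (c:ℤ))}) i j : ℤ)) := by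
          intro hlt
          rcases (hchar2 ((c:ℤ)+1) (by omega)).mpr hlt with hmem | hmem
          · have := (hchar _ (by omega)).mp hmem; omega
          · rw [Set.mem_singleton_iff, Prod.mk.injEq, Prod.mk.injEq] at hmem; omega
        omega
      refine ⟨_, hqC, ?_, ?_⟩
      · rw [htog]
        intro hEq
        exact hqO (hEq ▸ (Or.inr rfl : (((i:ℤ)-1, (j:ℤ)-1, (c:ℤ)) : ℤ×ℤ×ℤ)
          ∈ O ∪ {((i:ℤ)-1, (j:ℤ)-1, (c:ℤ))}))
      · rw [htog]
        funext a b
        simp only [replaceEntry]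
        by_cases hab : a = i ∧ b = j
        · obtain ⟨rfl, rfl⟩ := hab
          rw [if_pos ⟨rfl, rfl⟩, idealToPHF_eq hi1 him hj1 hjn, hij, hcnt2]
          ring
        · rw [if_neg hab]
          refine idealToPHF_congr_outside (fun p hp => ?_)
          have hpq : p ≠ ((i:ℤ)-1, (j:ℤ)-1, (c:ℤ)) :=
            fun hcon => notMem_Cset_of_ne hqC hab (hcon ▸ hp)
          exact ⟨fun h5 => h5.elim id (fun hcon => absurd hcon hpq),
            fun h5 => Or.inl h5⟩
  · rintro ⟨q, hqC, hne, heq⟩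
    rw [← heq]
    exact isPHF_idealToPHF (isOI_toggle hO q)
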